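/- If the equilibrium set E(Φ) of a continuous semiflow on a Riemannian manifold consists of isolated points, and there exists a proper continuous function V : M → ℝ that is strictly decreasing along all nonequilibrium trajectories, then the chain recurrent set equals the equilibrium set: R(Φ) = E(Φ). -/

import Mathlib

/-- An autonomous continuous semiflow on a metric space. -/
structure Semiflow (M : Type*) [MetricSpace M] where
  toFun : ℝ → M → M
  cont : Continuous fun p : ℝ × M => toFun p.1 p.2
  map_zero : ∀ x, toFun 0 x = x
  map_add : ∀ {s t : ℝ}, 0 ≤ s → 0 ≤ t → ∀ x, toFun t (toFun s x) = toFun (t + s) x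

/-- A closed `(ε, T)`-chain at `x`. -/
def Semiflow.IsChain {M : Type*} [MetricSpace M] (Φ : Semiflow M) (ε T : ℝ) (x : M) : Prop :=
  ∃ (n : ℕ) (xs : Fin (n + 1) → M) (ts : Fin n → ℝ),
    0 < n ∧ xs 0 = x ∧ xs (Fin.last n) = x ∧
    ∀ i : Fin n, T < ts i ∧ dist (Φ.toFun (ts i) (xs i.castSucc)) (xs i.succ) < ε

/-- The chain recurrent set of a semiflow. -/
def Semiflow.chainRecurrentSet {M : Type*} [MetricSpace M] (Φ : Semiflow M) : Set M :=
  {x | ∀ ε T : ℝ, 0 < ε → 0 < T → Φ.IsChain ε T x}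

/-- The equilibrium set of a semiflow. -/
def Semiflow.equilibria {M : Type*} [MetricSpace M] (Φ : Semiflow M) : Set M :=
  {x | ∀ t : ℝ, 0 ≤ t → Φ.toFun t x = x}

/-
If `p` is chain recurrent but not an equilibrium, `V` drops strictly along the orbit of `p`.
Since there are only finitely many equilibria in the compact sublevel set `{V ≤ V p}`, there
is an equilibrium-free band `L₁ ≤ V ≤ L₂` just below `V p`, on which the time-one map lowers
`V` by a uniform amount `μ`. Jumps of size `ε` raise `V` by less than `min μ (L₂ - L₁)`, so
every `(ε, 1)`-chain starting at `p` stays in `{V ≤ L₂}` after its first jump and cannot return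
to `p`.
-/

open Set Topology

theorem Set.Finite.exists_disjoint_Ioo {F : Set ℝ} (hF : F.Finite) {b c : ℝ} (hbc : b < c) :
    ∃ β, b ≤ β ∧ β < c ∧ Disjoint (Ioo β c) F := by
  have hnhds : (F \ {c})ᶜ ∈ 𝓝 c := hF.sdiff.isClosed.compl_mem_nhds (by simp)
  obtain ⟨β, hβc, hsub⟩ := exists_Ioc_subset_of_mem_nhds hnhds ⟨b, hbc⟩
  refine ⟨max b β, le_max_left b β, max_lt hbc hβc, disjoint_left.2 fun v hv hvF => ?_⟩
  exact hsub ⟨(le_max_right b β).trans_lt hv.1, hv.2.le⟩ ⟨hvF, hv.2.ne⟩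

theorem IsCompact.exists_pos_forall_lt_add_of_dist_lt {X : Type*} [PseudoMetricSpace X]
    {K : Set X} (hK : IsCompact K) {f : X → ℝ} (hf : Continuous f) {θ : ℝ} (hθ : 0 < θ) :
    ∃ ε > 0, ∀ y ∈ K, ∀ z, dist y z < ε → f z < f y + θ := by
  obtain ⟨ε, hε, hball⟩ := Metric.mem_uniformity_dist.1 <|
    hK.uniformContinuousAt_of_continuousAt f (fun y _ => hf.continuousAt)
      (Metric.dist_mem_uniformity hθ)
  refine ⟨ε, hε, fun y hy z hyz => ?_⟩
  have hfz : dist (f y) (f z) < θ := hball hyz hy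
  linarith [(abs_lt.1 (Real.dist_eq _ _ ▸ hfz)).1]

namespace Semiflow

variable {M : Type*} [MetricSpace M] (Φ : Semiflow M)

def IsStrictLyapunov (V : M → ℝ) : Prop :=
  ∀ x ∉ Φ.equilibria, ∀ t : ℝ, 0 < t → V (Φ.toFun t x) < V x

theorem continuous_toFun (t : ℝ) : Continuous (Φ.toFun t) :=
  Φ.cont.comp (Continuous.prodMk_right t)

theorem isClosed_equilibria : IsClosed Φ.equilibria := by
  have hE : Φ.equilibria = ⋂ (t : ℝ) (_ : 0 ≤ t), {x | Φ.toFun t x = x} := by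
    ext x; simp [Semiflow.equilibria]
  rw [hE]
  exact isClosed_biInter fun t _ => isClosed_eq (Φ.continuous_toFun t) continuous_id

theorem equilibria_subset_chainRecurrentSet : Φ.equilibria ⊆ Φ.chainRecurrentSet := by
  intro x hx ε T hε _
  refine ⟨1, fun _ => x, fun _ => T + 1, one_pos, rfl, rfl, fun _ => ⟨lt_add_one T, ?_⟩⟩
  rwa [hx (T + 1) (by linarith), dist_self]

theorem not_isChain_of_absorbing {ε T : ℝ} {x : M} {B : Set M} (hxB : x ∉ B)
    (hB : ∀ y ∈ insert x B, ∀ t > T, ∀ z, dist (Φ.toFun t y) z < ε → z ∈ B) :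
    ¬ Φ.IsChain ε T x := by
  rintro ⟨n, xs, ts, hn, hx0, hxn, hstep⟩
  have hmem : ∀ i, xs i ∈ insert x B := Fin.induction (hx0 ▸ mem_insert x B)
    fun i hi => mem_insert_of_mem x (hB _ hi _ (hstep i).1 _ (hstep i).2)
  obtain ⟨m, rfl⟩ := Nat.exists_eq_add_one.2 hn
  have hlast : xs (Fin.last m).succ ∈ B :=
    hB _ (hmem _) _ (hstep (Fin.last m)).1 _ (hstep (Fin.last m)).2
  rw [Fin.succ_last, hxn] at hlast
  exact hxB hlast

variable {Φ} {V : M → ℝ}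

theorem IsStrictLyapunov.le_of_nonneg (hV : Φ.IsStrictLyapunov V) (x : M) {t : ℝ}
    (ht : 0 ≤ t) : V (Φ.toFun t x) ≤ V x := by
  by_cases hx : x ∈ Φ.equilibria
  · rw [hx t ht]
  rcases ht.eq_or_lt with rfl | ht
  · rw [Φ.map_zero]
  · exact (hV x hx t ht).le

theorem IsStrictLyapunov.le_of_le (hV : Φ.IsStrictLyapunov V) (x : M) {s t : ℝ}
    (hs : 0 ≤ s) (hst : s ≤ t) : V (Φ.toFun t x) ≤ V (Φ.toFun s x) := by
  have hsplit : Φ.toFun (t - s) (Φ.toFun s x) = Φ.toFun t x := by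
    rw [Φ.map_add hs (sub_nonneg.2 hst), sub_add_cancel]
  rw [← hsplit]
  exact hV.le_of_nonneg _ (sub_nonneg.2 hst)

theorem IsStrictLyapunov.exists_pos_forall_add_le (hV : Φ.IsStrictLyapunov V)
    (hVc : Continuous V) {K : Set M} (hK : IsCompact K) (hKE : Disjoint K Φ.equilibria) :
    ∃ μ > 0, ∀ y ∈ K, V (Φ.toFun 1 y) + μ ≤ V y := by
  obtain ⟨μ, hμ, hle⟩ := hK.exists_forall_le' (a := 0)
    (hVc.sub (hVc.comp (Φ.continuous_toFun 1))).continuousOn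
    fun y hy => sub_pos.2 (hV y (disjoint_left.1 hKE hy) 1 one_pos)
  refine ⟨μ, hμ, fun y hy => ?_⟩
  have hμy := hle y hy
  simp only [Pi.sub_apply, Function.comp_apply] at hμy
  linarith

theorem finite_equilibria_inter
    (hiso : ∀ x ∈ Φ.equilibria, ∃ U : Set M, IsOpen U ∧ U ∩ Φ.equilibria = {x})
    {K : Set M} (hK : IsCompact K) : (Φ.equilibria ∩ K).Finite :=
  (hK.inter_left Φ.isClosed_equilibria).finite
    ((isDiscrete_iff_forall_mem_exists_isOpen.2 hiso).mono inter_subset_left)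

theorem IsStrictLyapunov.exists_pos_not_isChain (hV : Φ.IsStrictLyapunov V) (hVc : Continuous V)
    (hVproper : ∀ c : ℝ, IsCompact {x : M | V x ≤ c}) {p : M} {β : ℝ} (hβ : β < V p)
    (hpβ : V (Φ.toFun 1 p) ≤ β) (hgap : ∀ y ∈ Φ.equilibria, V y ∉ Ioo β (V p)) :
    ∃ ε > 0, ¬ Φ.IsChain ε 1 p := by
  obtain ⟨L₂, hβL₂, hL₂p⟩ := exists_between hβ
  obtain ⟨L₁, hβL₁, hL₁L₂⟩ := exists_between hβL₂
  have hband : IsCompact {y | L₁ ≤ V y ∧ V y ≤ L₂} :=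
    (hVproper L₂).inter_left (isClosed_le continuous_const hVc)
  obtain ⟨μ, hμ, hdrop⟩ := hV.exists_pos_forall_add_le hVc hband <|
    disjoint_left.2 fun y hy hyE => hgap y hyE ⟨hβL₁.trans_le hy.1, hy.2.trans_lt hL₂p⟩
  set θ := min μ (L₂ - L₁)
  have hθ : 0 < θ := lt_min hμ (sub_pos.2 hL₁L₂)
  obtain ⟨ε, hε, hjump⟩ := (hVproper (V p)).exists_pos_forall_lt_add_of_dist_lt hVc hθ
  refine ⟨ε, hε, Φ.not_isChain_of_absorbing (B := {y | V y ≤ L₂}) (not_le.2 hL₂p) ?_⟩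
  have hflow : ∀ y ∈ insert p {y | V y ≤ L₂}, ∀ t > 1,
      V (Φ.toFun t y) + θ ≤ L₂ := by
    rintro y hy t ht
    have hflow₁ : V (Φ.toFun t y) ≤ V (Φ.toFun 1 y) := hV.le_of_le y zero_le_one ht.le
    have hθμ : θ ≤ μ := min_le_left _ _
    have hθL : θ ≤ L₂ - L₁ := min_le_right _ _
    rcases hy with rfl | hy
    · linarith
    replace hy : V y ≤ L₂ := hy
    by_cases hyL₁ : V y ≤ L₁
    · linarith [hV.le_of_nonneg y (zero_le_one.trans ht.le)]
    · linarith [hdrop y ⟨(not_le.1 hyL₁).le, hy⟩]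
  intro y hy t ht z hz
  have hflowy := hflow y hy t ht
  exact ((hjump _ (show V (Φ.toFun t y) ≤ V p by linarith) z hz).trans_le hflowy).le

theorem chainRecurrentSet_subset_equilibria (hV : Φ.IsStrictLyapunov V) (hVc : Continuous V)
    (hVproper : ∀ c : ℝ, IsCompact {x : M | V x ≤ c})
    (hiso : ∀ x ∈ Φ.equilibria, ∃ U : Set M, IsOpen U ∧ U ∩ Φ.equilibria = {x}) :
    Φ.chainRecurrentSet ⊆ Φ.equilibria := by
  intro p hp
  by_contra hpE
  obtain ⟨β, hpβ, hβ, hdisj⟩ := ((Φ.finite_equilibria_inter hiso (hVproper (V p))).image V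
    ).exists_disjoint_Ioo (hV p hpE 1 one_pos)
  obtain ⟨ε, hε, hchain⟩ := hV.exists_pos_not_isChain hVc hVproper hβ hpβ
    fun y hyE hy => disjoint_left.1 hdisj hy ⟨y, ⟨hyE, hy.2.le⟩, rfl⟩
  exact hchain (hp ε 1 hε one_pos)

end Semiflow

/-- If the equilibrium set of a continuous semiflow consists of isolated
points, and there exists a proper continuous `V : M → ℝ` strictly decreasing along all
nonequilibrium trajectories, then the chain recurrent set equals the equilibrium set. -/
theorem chainRecurrentSet_eq_equilibria
    {M : Type*} [MetricSpace M] (Φ : Semiflow M) (V : M → ℝ)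
    (hVcont : Continuous V)
    (hVproper : ∀ c : ℝ, IsCompact {x : M | V x ≤ c})
    (hiso : ∀ x ∈ Φ.equilibria, ∃ U : Set M, IsOpen U ∧ U ∩ Φ.equilibria = {x})
    (hdec : ∀ x ∉ Φ.equilibria, ∀ t : ℝ, 0 < t → V (Φ.toFun t x) < V x) :
    Φ.chainRecurrentSet = Φ.equilibria :=
  (Φ.chainRecurrentSet_subset_equilibria hdec hVcont hVproper hiso).antisymm
    Φ.equilibria_subset_chainRecurrentSet
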